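/- Let γ > 0, 0 ≤ μ_a < 1, 0 ≤ μ_b < 1, a(x) = x^{μ_a} on [0,1], b(x) = (1+x)^{μ_b} on [−1,0]. Suppose u ∈ V²_a(0,1) and w ∈ V²_b(−1,0) satisfy (a u')' = 0 a.e. on (0,1), (b w')' = 0 a.e. on (−1,0), w(−1) = 0, u(0) = w(0), lim_{x→0⁺}(a u')(x) = (b w')(0), and γ u(1) + u'(1) = 0. Then u ≡ 0 and w ≡ 0. -/

import Mathlib

/-!
Since `(a u')' = 0` a.e., the flux `a u'` is constant on each string, and the transmission
condition makes it the same constant `c` on both. Hence `u' = c x^(-μ_a)` and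
`w' = c (1 + x)^(-μ_b)`, which are integrable up to the degenerate endpoints because the
exponents exceed `-1`. Integrating from `-1`, where `w` vanishes, through the junction gives
`u(1) = (I_a + I_b) c` with `I_a, I_b ≥ 0`, so the Robin condition reads
`(γ (I_a + I_b) + 1) c = 0`, forcing `c = 0` and then `u = w = 0`.
-/

open MeasureTheory Set Filter Topology

/-- `u ∈ V¹_α(x₀, ℓ)` (complex-valued): `u ∈ L²(x₀, ℓ)`, `u` is locally absolutely
continuous on `(x₀, ℓ]` with a.e. derivative `u'` (expressed via the fundamental theorem of
calculus on compact subintervals of `(x₀, ℓ]`), and `√α · u' ∈ L²(x₀, ℓ)`. -/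
def MemV1C (x₀ ℓ : ℝ) (α : ℝ → ℝ) (u u' : ℝ → ℂ) : Prop :=
  MemLp u 2 (volume.restrict (Ioo x₀ ℓ)) ∧
  (∀ x y : ℝ, x₀ < x → x ≤ y → y ≤ ℓ →
    IntervalIntegrable u' volume x y ∧ u y - u x = ∫ t in x..y, u' t) ∧
  MemLp (fun x => Real.sqrt (α x) • u' x) 2 (volume.restrict (Ioo x₀ ℓ))

/-- `u ∈ V²_α(x₀, ℓ)` (complex-valued): `u ∈ V¹_α(x₀, ℓ)` and `α·u' ∈ H¹(x₀, ℓ)`, i.e.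
`α·u' ∈ L²`, it is absolutely continuous with a.e. derivative `g' = (α u')' ∈ L²`. -/
def MemV2C (x₀ ℓ : ℝ) (α : ℝ → ℝ) (u u' g' : ℝ → ℂ) : Prop :=
  MemV1C x₀ ℓ α u u' ∧
  MemLp (fun x => α x • u' x) 2 (volume.restrict (Ioo x₀ ℓ)) ∧
  MemLp g' 2 (volume.restrict (Ioo x₀ ℓ)) ∧
  ∀ x y : ℝ, x₀ < x → x ≤ y → y ≤ ℓ →
    IntervalIntegrable g' volume x y ∧ α y • u' y - α x • u' x = ∫ t in x..y, g' t

theorem intervalIntegral_eq_zero_of_ae_restrict_Ioo {E : Type*} [NormedAddCommGroup E]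
    [NormedSpace ℝ E] {g : ℝ → E} {x₀ ℓ x y : ℝ}
    (hg : g =ᵐ[volume.restrict (Ioo x₀ ℓ)] 0) (hx : x₀ ≤ x) (hxy : x ≤ y) (hy : y ≤ ℓ) :
    ∫ t in x..y, g t = 0 := by
  rw [intervalIntegral.integral_of_le hxy]
  refine integral_eq_zero_of_ae (ae_restrict_of_ae_restrict_of_subset (Ioc_subset_Ioc hx hy) ?_)
  rwa [← Measure.restrict_congr_set Ioo_ae_eq_Ioc]

theorem MemV2C.smul_deriv_eq_of_ae_eq_zero {x₀ ℓ : ℝ} {α : ℝ → ℝ} {u u' g' : ℝ → ℂ}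
    (h : MemV2C x₀ ℓ α u u' g') (hg : g' =ᵐ[volume.restrict (Ioo x₀ ℓ)] 0) {x : ℝ}
    (hx : x ∈ Ioc x₀ ℓ) : α x • u' x = α ℓ • u' ℓ := by
  have hflux := (h.2.2.2 x ℓ hx.1 hx.2 le_rfl).2
  rw [intervalIntegral_eq_zero_of_ae_restrict_Ioo hg hx.1.le hx.2 le_rfl] at hflux
  exact (sub_eq_zero.mp hflux).symm

theorem eq_add_integral_smul_of_tendsto {E : Type*} [NormedAddCommGroup E] [NormedSpace ℝ E]
    [CompleteSpace E] {x₀ ℓ : ℝ} {u u' : ℝ → E} {ρ : ℝ → ℝ} {C L : E}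
    (hftc : ∀ x y : ℝ, x₀ < x → x ≤ y → y ≤ ℓ → u y - u x = ∫ t in x..y, u' t)
    (hρ : ∀ t ∈ Ioc x₀ ℓ, u' t = ρ t • C) (hρi : IntervalIntegrable ρ volume x₀ ℓ)
    (hL : Tendsto u (𝓝[>] x₀) (𝓝 L)) :
    ∀ y ∈ Ioc x₀ ℓ, u y = L + (∫ t in x₀..y, ρ t) • C := by
  intro y hy
  have hsub : ∀ x ∈ Ioc x₀ y, u y - u x = (∫ t in x..y, ρ t) • C := by
    intro x hx
    rw [hftc x y hx.1 hx.2 hy.2, ← intervalIntegral.integral_smul_const]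
    refine intervalIntegral.integral_congr fun t ht => hρ t ?_
    rw [uIcc_of_le hx.2] at ht
    exact ⟨hx.1.trans_le ht.1, ht.2.trans hy.2⟩
  have hprim : Tendsto (fun x => ∫ t in x..y, ρ t) (𝓝[>] x₀) (𝓝 (∫ t in x₀..y, ρ t)) := by
    have hint : IntegrableOn ρ (uIcc x₀ y) := by
      rw [uIcc_of_le hy.1.le, ← intervalIntegrable_iff_integrableOn_Icc_of_le hy.1.le]
      refine hρi.mono_set ?_
      rw [uIcc_of_le hy.1.le, uIcc_of_le (hy.1.trans_le hy.2).le]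
      exact Icc_subset_Icc le_rfl hy.2
    have hcont := intervalIntegral.continuousOn_primitive_interval_left hint x₀ left_mem_uIcc
    rw [ContinuousWithinAt, uIcc_of_le hy.1.le, nhdsWithin_Icc_eq_nhdsGE hy.1] at hcont
    exact hcont.mono_left (nhdsWithin_mono _ Ioi_subset_Ici_self)
  have hu : Tendsto u (𝓝[>] x₀) (𝓝 (u y - (∫ t in x₀..y, ρ t) • C)) := by
    refine (tendsto_const_nhds.sub (hprim.smul_const C)).congr' ?_
    filter_upwards [Ioc_mem_nhdsGT hy.1] with x hx
    rw [← hsub x hx, sub_sub_cancel]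
  rw [tendsto_nhds_unique hL hu, sub_add_cancel]

theorem eq_rpow_neg_smul_of_rpow_smul_eq {t μ : ℝ} (ht : 0 < t) {v C : ℂ}
    (h : t ^ μ • v = C) : v = t ^ (-μ) • C := by
  rw [← h, smul_smul, Real.rpow_neg ht.le, inv_mul_cancel₀ (Real.rpow_pos_of_pos ht μ).ne',
    one_smul]

theorem kernel_trivial_weak_general (γ μa μb : ℝ) (hγ : 0 < γ)
    (hμa1 : μa < 1) (hμb1 : μb < 1)
    (u u' gu w w' gw : ℝ → ℂ)
    (hu : MemV2C 0 1 (fun x => x ^ μa) u u' gu)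
    (hw : MemV2C (-1) 0 (fun x => (1 + x) ^ μb) w w' gw)
    (hgu : gu =ᵐ[volume.restrict (Ioo (0 : ℝ) 1)] 0)
    (hgw : gw =ᵐ[volume.restrict (Ioo (-1 : ℝ) 0)] 0)
    (hwm1 : Tendsto w (𝓝[>] (-1 : ℝ)) (𝓝 0))
    (huw : Tendsto u (𝓝[>] (0 : ℝ)) (𝓝 (w 0)))
    (htrans : Tendsto (fun x : ℝ => (x ^ μa : ℝ) • u' x) (𝓝[>] (0 : ℝ))
      (𝓝 ((((1 : ℝ) + 0) ^ μb : ℝ) • w' 0)))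
    (hbc : (γ : ℂ) * u 1 + u' 1 = 0) :
    (∀ x ∈ Ioc (0 : ℝ) 1, u x = 0) ∧ (∀ x ∈ Ioc (-1 : ℝ) 0, w x = 0) := by
  set c := u' 1
  have hflux_u : ∀ x ∈ Ioc (0 : ℝ) 1, x ^ μa • u' x = c := fun x hx => by
    simpa using hu.smul_deriv_eq_of_ae_eq_zero hgu hx
  have hw'0 : w' 0 = c := by
    refine tendsto_nhds_unique (by simpa using htrans) (tendsto_const_nhds.congr' ?_)
    filter_upwards [Ioc_mem_nhdsGT one_pos] with x hx
    exact (hflux_u x hx).symm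
  have hu' : ∀ x ∈ Ioc (0 : ℝ) 1, u' x = x ^ (-μa) • c := fun x hx =>
    eq_rpow_neg_smul_of_rpow_smul_eq hx.1 (hflux_u x hx)
  have hw' : ∀ x ∈ Ioc (-1 : ℝ) 0, w' x = (1 + x) ^ (-μb) • c := fun x hx =>
    eq_rpow_neg_smul_of_rpow_smul_eq (by linarith [hx.1])
      (by simpa [hw'0] using hw.smul_deriv_eq_of_ae_eq_zero hgw hx)
  have hu_eq := eq_add_integral_smul_of_tendsto (fun x y hx hxy hy => (hu.1.2.1 x y hx hxy hy).2)
    hu' (intervalIntegral.intervalIntegrable_rpow' (by linarith)) huw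
  have hw_eq := eq_add_integral_smul_of_tendsto (fun x y hx hxy hy => (hw.1.2.1 x y hx hxy hy).2)
    hw' (by simpa using (intervalIntegral.intervalIntegrable_rpow' (a := 0) (b := 1)
      (by linarith : -1 < -μb)).comp_add_left 1) hwm1
  have hc : c = 0 := by
    set Ia := ∫ t in (0 : ℝ)..1, t ^ (-μa)
    set Ib := ∫ t in (-1 : ℝ)..0, (1 + t) ^ (-μb)
    have hIa : 0 ≤ Ia := intervalIntegral.integral_nonneg zero_le_one
      fun t ht => Real.rpow_nonneg ht.1 _
    have hIb : 0 ≤ Ib := intervalIntegral.integral_nonneg (by norm_num)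
      fun t ht => Real.rpow_nonneg (by linarith [ht.1]) _
    rw [hu_eq 1 ⟨one_pos, le_rfl⟩, hw_eq 0 ⟨neg_one_lt_zero, le_rfl⟩] at hbc
    have hK : ((γ * (Ib + Ia) + 1 : ℝ) : ℂ) * c = 0 := by
      rw [← hbc]; simp only [Complex.real_smul]; push_cast; ring
    exact (mul_eq_zero.mp hK).resolve_left (by exact_mod_cast (by positivity : (0:ℝ) < _).ne')
  have hw_zero : ∀ x ∈ Ioc (-1 : ℝ) 0, w x = 0 := fun x hx => by simp [hw_eq x hx, hc]
  exact ⟨fun x hx => by simp [hu_eq x hx, hw_zero 0 ⟨neg_one_lt_zero, le_rfl⟩, hc], hw_zero⟩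

/-- Kernel of the operator (weakly degenerate left string, `μ_b < 1`):
if `u ∈ V²_a(0,1)`, `w ∈ V²_b(-1,0)` satisfy `(a u')' = 0` and `(b w')' = 0` a.e.,
`w(-1) = 0`, `u(0) = w(0)`, `lim_{x→0⁺}(a u')(x) = (b w')(0)` and `γ u(1) + u'(1) = 0`,
then `u ≡ 0` and `w ≡ 0`. -/
theorem kernel_trivial_weak (γ μa μb : ℝ) (hγ : 0 < γ)
    (hμa0 : 0 ≤ μa) (hμa1 : μa < 1) (hμb0 : 0 ≤ μb) (hμb1 : μb < 1)
    (u u' gu w w' gw : ℝ → ℂ)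
    (hu : MemV2C 0 1 (fun x => x ^ μa) u u' gu)
    (hw : MemV2C (-1) 0 (fun x => (1 + x) ^ μb) w w' gw)
    (hgu : gu =ᵐ[volume.restrict (Ioo (0 : ℝ) 1)] 0)
    (hgw : gw =ᵐ[volume.restrict (Ioo (-1 : ℝ) 0)] 0)
    (hwm1 : Tendsto w (𝓝[>] (-1 : ℝ)) (𝓝 0))
    (huw : Tendsto u (𝓝[>] (0 : ℝ)) (𝓝 (w 0)))
    (htrans : Tendsto (fun x : ℝ => (x ^ μa : ℝ) • u' x) (𝓝[>] (0 : ℝ))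
      (𝓝 ((((1 : ℝ) + 0) ^ μb : ℝ) • w' 0)))
    (hbc : (γ : ℂ) * u 1 + u' 1 = 0) :
    (∀ x ∈ Ioc (0 : ℝ) 1, u x = 0) ∧ (∀ x ∈ Ioc (-1 : ℝ) 0, w x = 0) :=
  kernel_trivial_weak_general γ μa μb hγ hμa1 hμb1 u u' gu w w' gw hu hw hgu hgw hwm1 huw htrans hbc
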